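/- arXiv:1906.01307 — 2 statements merged into one kernel-verified Lean document; each statement's English description precedes it below -/
import Mathlib

section
/- Let Γ be a connected k-regular graph on n vertices with d+1 distinct adjacency eigenvalues, diameter D, and predistance polynomials p_0,...,p_d with partial sums q_j = p_0 + ... + p_j. Then n / (∑_{x∈X} 1/(n - |Γ_D(x)|)) ≥ q_{D-1}(k), i.e., the harmonic mean of the numbers n - |Γ_D(x)| over all vertices x is at least q_{D-1}(k). -/
open Polynomial Matrix Finset
open scoped Classical

/-- Inner product on polynomials induced by a symmetric matrix `M`:
`⟨f,g⟩ = (1/n) tr(f(M) g(M))`. -/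
noncomputable def minner {V : Type*} [Fintype V] [DecidableEq V] (M : Matrix V V ℝ)
    (f g : Polynomial ℝ) : ℝ :=
  (Matrix.trace (aeval M f * aeval M g)) / (Fintype.card V : ℝ)

/-- Number of vertices at distance exactly `i` from `x`. -/
noncomputable def nDist {V : Type*} (G : SimpleGraph V) (x : V) (i : ℕ) : ℕ :=
  Nat.card {y : V | G.dist x y = i}

/-- The distance-`i` (0,1)-matrix of a graph. -/
noncomputable def distMatrix {V : Type*} (G : SimpleGraph V) (i : ℕ) : Matrix V V ℝ :=
  Matrix.of fun x y => if G.dist x y = i ∧ x ≠ y then (1 : ℝ) else 0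

/-- `G` has diameter `D`. -/
def HasDiameter {V : Type*} (G : SimpleGraph V) (D : ℕ) : Prop :=
  (∀ x y : V, G.dist x y ≤ D) ∧ ∃ x y : V, G.dist x y = D

/-- `p 0, …, p d` is the system of (pre)distance polynomials of the matrix `M` whose
largest eigenvalue is `lam0`: `p i` has degree `i`, they are mutually orthogonal with
respect to `minner M`, and they are normalized by `‖p i‖² = p i (lam0)`. -/
def IsPredistanceSystem {V : Type*} [Fintype V] [DecidableEq V] (M : Matrix V V ℝ) (lam0 : ℝ) (d : ℕ)
    (p : ℕ → Polynomial ℝ) : Prop :=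
  (∀ i ≤ d, (p i).natDegree = i) ∧
  (∀ i ≤ d, ∀ j ≤ d, i ≠ j → minner M (p i) (p j) = 0) ∧
  (∀ i ≤ d, minner M (p i) (p i) = (p i).eval lam0)

/-- A (connected) graph is distance-regular if the intersection numbers
`b_i = |Γ(y) ∩ Γ_{i+1}(x)|` and `c_i = |Γ(y) ∩ Γ_{i-1}(x)|` depend only on `i = dist x y`. -/
def IsDistanceRegular {V : Type*} (G : SimpleGraph V) : Prop :=
  G.Connected ∧ ∀ i : ℕ, ∃ b c : ℕ, ∀ x y : V, G.dist x y = i →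
    Nat.card {z : V | G.Adj y z ∧ G.dist x z = i + 1} = b ∧
    Nat.card {z : V | G.Adj y z ∧ G.dist x z = i - 1} = c

/-- Average degree of a graph. -/
noncomputable def avgDeg {V : Type*} [Fintype V] [DecidableEq V] (G : SimpleGraph V)
    [DecidableRel G.Adj] : ℝ :=
  (∑ x : V, (G.degree x : ℝ)) / (Fintype.card V : ℝ)

/-- Average of the squared degrees of a graph. -/
noncomputable def avgSqDeg {V : Type*} [Fintype V] [DecidableEq V] (G : SimpleGraph V)
    [DecidableRel G.Adj] : ℝ :=
  (∑ x : V, (G.degree x : ℝ) ^ 2) / (Fintype.card V : ℝ)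

/-- The first Laplacian predistance polynomial
`r₁(x) = (k̄/(k̄(k̄-1) - k̄²)) (x - k̄)`. -/
noncomputable def r1 {V : Type*} [Fintype V] [DecidableEq V] (G : SimpleGraph V)
    [DecidableRel G.Adj] : Polynomial ℝ :=
  Polynomial.C (avgDeg G / (avgDeg G * (avgDeg G - 1) - avgSqDeg G)) *
    (Polynomial.X - Polynomial.C (avgDeg G))

section Aux
variable {n : Type*} [Fintype n] [DecidableEq n]

lemma aeval_conj (U B Ui : Matrix n n ℝ) (h1 : U * Ui = 1) (h2 : Ui * U = 1)
    (f : Polynomial ℝ) : aeval (U * B * Ui) f = U * aeval B f * Ui := by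
  let φ : Matrix n n ℝ →ₐ[ℝ] Matrix n n ℝ :=
  { toFun := fun C => U * C * Ui
    map_one' := by show U * 1 * Ui = 1; rw [Matrix.mul_one, h1]
    map_mul' := fun C D => by
      show U * (C * D) * Ui = U * C * Ui * (U * D * Ui)
      rw [show U * C * Ui * (U * D * Ui) = U * C * (Ui * U) * D * Ui by
        simp only [Matrix.mul_assoc], h2, Matrix.mul_one]
      simp only [Matrix.mul_assoc]
    map_zero' := by show U * 0 * Ui = 0; simp
    map_add' := fun C D => by
      show U * (C + D) * Ui = U * C * Ui + U * D * Ui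
      simp [Matrix.mul_add, Matrix.add_mul]
    commutes' := fun r => by
      show U * algebraMap ℝ _ r * Ui = algebraMap ℝ _ r
      simp only [Algebra.algebraMap_eq_smul_one, Matrix.mul_smul, Matrix.smul_mul,
        Matrix.mul_one, h1] }
  have h := aeval_algHom_apply φ B f
  simpa [φ] using h

lemma aeval_diag (v : n → ℝ) (f : Polynomial ℝ) :
    aeval (Matrix.diagonal v) f = Matrix.diagonal (fun i => f.eval (v i)) := by
  have h := aeval_algHom_apply (Matrix.diagonalAlgHom (n := n) (α := ℝ) ℝ) v f
  simp only [Matrix.diagonalAlgHom_apply] at h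
  rw [h]
  have h2 : (aeval v f : n → ℝ) = fun i => f.eval (v i) := by
    funext i
    rw [show f.eval (v i) = aeval (v i) f from (Polynomial.aeval_def (v i) f).trans (by simp [Polynomial.eval_map, Polynomial.eval₂_eq_eval_map])]
    exact (aeval_algHom_apply (Pi.evalAlgHom ℝ (fun _ => ℝ) i) v f).symm
  rw [h2]

end Aux

section Graph
variable {V : Type*} [Fintype V] [DecidableEq V] (G : SimpleGraph V) [DecidableRel G.Adj]

lemma pow_entry_zero (m : ℕ) (x y : V) (h : m < G.dist x y) :
    ((G.adjMatrix ℝ) ^ m) x y = 0 := by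
  rw [SimpleGraph.adjMatrix_pow_apply_eq_card_walk]
  norm_cast
  rw [Fintype.card_eq_zero_iff]
  constructor
  rintro ⟨w, hw⟩
  exact absurd (hw ▸ SimpleGraph.dist_le w) (by omega)

lemma pow_entry_pos (x y : V) (hr : G.Reachable x y) :
    0 < ((G.adjMatrix ℝ) ^ (G.dist x y)) x y := by
  rw [SimpleGraph.adjMatrix_pow_apply_eq_card_walk]
  norm_cast
  rw [Fintype.card_pos_iff]
  obtain ⟨w, hw⟩ := hr.exists_walk_length_eq_dist
  exact ⟨⟨w, hw⟩⟩

lemma aeval_entry_zero (f : Polynomial ℝ) (x y : V) (h : f.natDegree < G.dist x y) :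
    (aeval (G.adjMatrix ℝ) f) x y = 0 := by
  rw [Polynomial.aeval_eq_sum_range]
  rw [Matrix.sum_apply]
  apply Finset.sum_eq_zero
  intro m hm
  rw [Finset.mem_range] at hm
  rw [Matrix.smul_apply, pow_entry_zero G m x y (by omega), smul_zero]

lemma gr_exists_dist_pred (hconn : G.Connected) (x y : V) {m : ℕ} (h : G.dist x y = m + 1) :
    ∃ v : V, G.dist x v = m := by
  have hr : G.Reachable y x := hconn y x
  obtain ⟨w, hw⟩ := hr.exists_walk_length_eq_dist
  rw [SimpleGraph.dist_comm] at h
  cases w with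
  | nil => simp at hw; simp at h
  | cons hadj w' =>
    rename_i z
    have hw1 : w'.length = m := by
      have := hw
      simp only [SimpleGraph.Walk.length_cons, h] at this
      omega
    refine ⟨z, le_antisymm ?_ ?_⟩
    · have := SimpleGraph.dist_le w'.reverse
      simp only [SimpleGraph.Walk.length_reverse] at this
      omega
    · have htri := hconn.dist_triangle (u := y) (v := z) (w := x)
      have h1 : G.dist y z ≤ 1 := SimpleGraph.dist_le (SimpleGraph.Walk.cons hadj SimpleGraph.Walk.nil)
      rw [SimpleGraph.dist_comm]
      omega

lemma gr_exists_dist_eq (hconn : G.Connected) (x y : V) (j : ℕ) (hj : j ≤ G.dist x y) :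
    ∃ v : V, G.dist x v = j := by
  set D := G.dist x y with hD
  have key : ∀ i : ℕ, ∃ v : V, G.dist x v = D - i := by
    intro i
    induction i with
    | zero => exact ⟨y, rfl⟩
    | succ i ih =>
      obtain ⟨v, hv⟩ := ih
      by_cases h0 : D - i = 0
      · exact ⟨x, by rw [SimpleGraph.dist_self]; omega⟩
      · obtain ⟨m, hm⟩ : ∃ m, D - i = m + 1 := ⟨D - i - 1, by omega⟩
        obtain ⟨u, hu⟩ := gr_exists_dist_pred G hconn x v (hv.trans hm)
        exact ⟨u, by rw [hu]; omega⟩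
  obtain ⟨v, hv⟩ := key (D - j)
  exact ⟨v, by rw [hv]; omega⟩

end Graph

section Spec
variable {V : Type*} [Fintype V] [DecidableEq V] (G : SimpleGraph V) [DecidableRel G.Adj]

lemma annihilating (A : Matrix V V ℝ) (hA : A.IsHermitian) :
    aeval A (∏ lam ∈ (Matrix.finite_spectrum A).toFinset, (X - C lam)) = 0 := by
  set P : Polynomial ℝ := ∏ lam ∈ (Matrix.finite_spectrum A).toFinset, (X - C lam) with hP
  have hU1 : (hA.eigenvectorUnitary : Matrix V V ℝ) * star (hA.eigenvectorUnitary : Matrix V V ℝ) = 1 :=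
    Unitary.mul_star_self_of_mem hA.eigenvectorUnitary.prop
  have hU2 : star (hA.eigenvectorUnitary : Matrix V V ℝ) * (hA.eigenvectorUnitary : Matrix V V ℝ) = 1 :=
    Unitary.star_mul_self_of_mem hA.eigenvectorUnitary.prop
  have hst := hA.spectral_theorem
  rw [hst, Unitary.conjStarAlgAut_apply, aeval_conj _ _ _ hU1 hU2, aeval_diag]
  have hz : (fun i => P.eval ((RCLike.ofReal ∘ hA.eigenvalues) i)) = fun _ => (0 : ℝ) := by
    funext i
    have hmem : hA.eigenvalues i ∈ (Matrix.finite_spectrum A).toFinset := by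
      rw [Set.Finite.mem_toFinset]
      exact hA.eigenvalues_mem_spectrum_real i
    have : ((RCLike.ofReal ∘ hA.eigenvalues) i : ℝ) = hA.eigenvalues i := by
      simp [RCLike.ofReal]
    rw [this, hP, Polynomial.eval_prod]
    exact Finset.prod_eq_zero hmem (by simp)
  rw [hz]
  simp

lemma diam_le_d (hconn : G.Connected) (d : ℕ)
    (hd : Nat.card (spectrum ℝ (G.adjMatrix ℝ)) = d + 1)
    {x y : V} {D : ℕ} (hxy : G.dist x y = D) : D ≤ d := by
  by_contra hcon
  push_neg at hcon
  have hA : (G.adjMatrix ℝ).IsHermitian := by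
    rw [Matrix.IsHermitian, Matrix.conjTranspose]
    ext i j
    simp [Matrix.transpose_apply, SimpleGraph.adjMatrix_apply, SimpleGraph.adj_comm]
  set S := (Matrix.finite_spectrum (G.adjMatrix ℝ)).toFinset with hS
  have hcard : S.card = d + 1 := by
    rw [hS, ← Set.ncard_eq_toFinset_card _ (Matrix.finite_spectrum _), ← Nat.card_coe_set_eq, hd]
  set P : Polynomial ℝ := ∏ lam ∈ S, (X - C lam) with hP
  have hmonic : P.Monic := monic_prod_of_monic _ _ fun _ _ => monic_X_sub_C _
  have hdeg : P.natDegree = d + 1 := by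
    rw [hP, natDegree_prod_of_monic _ _ fun _ _ => monic_X_sub_C _]
    simp [hcard]
  obtain ⟨v, hv⟩ := gr_exists_dist_eq G hconn x y (d + 1) (by omega)
  have hP0 : aeval (G.adjMatrix ℝ) P = 0 := annihilating _ hA
  have h0 : (aeval (G.adjMatrix ℝ) P) x v = 0 := by rw [hP0]; rfl
  rw [Polynomial.aeval_eq_sum_range, Matrix.sum_apply] at h0
  rw [Finset.sum_eq_single (d + 1)] at h0
  · have hc1 : P.coeff (d + 1) = 1 := by rw [← hdeg]; exact hmonic.coeff_natDegree
    rw [hc1, Matrix.smul_apply, one_smul] at h0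
    have := pow_entry_pos G x v (hconn x v)
    rw [hv] at this
    linarith
  · intro m hm hne
    rw [Finset.mem_range, hdeg] at hm
    rw [Matrix.smul_apply, pow_entry_zero G m x v (by omega), smul_zero]
  · intro h
    exfalso
    apply h
    rw [Finset.mem_range, hdeg]
    omega

end Spec

section Rows
variable {V : Type*} [Fintype V] [DecidableEq V] (G : SimpleGraph V) [DecidableRel G.Adj]

lemma row_sum_pow {k : ℕ} (hreg : G.IsRegularOfDegree k) (m : ℕ) (x : V) :
    ∑ y, ((G.adjMatrix ℝ) ^ m) x y = (k : ℝ) ^ m := by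
  induction m with
  | zero => simp [Matrix.one_apply]
  | succ m ih =>
    rw [pow_succ]
    have : ∀ y : V, ∑ z, ((G.adjMatrix ℝ) ^ m) x z * (G.adjMatrix ℝ) z y
        = ((G.adjMatrix ℝ) ^ m * G.adjMatrix ℝ) x y := fun y => rfl
    calc ∑ y, ((G.adjMatrix ℝ) ^ m * G.adjMatrix ℝ) x y
        = ∑ y, ∑ z, ((G.adjMatrix ℝ) ^ m) x z * (G.adjMatrix ℝ) z y := by
          refine Finset.sum_congr rfl fun y _ => ?_
          rw [Matrix.mul_apply]
      _ = ∑ z, ((G.adjMatrix ℝ) ^ m) x z * ∑ y, (G.adjMatrix ℝ) z y := by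
          rw [Finset.sum_comm]
          exact Finset.sum_congr rfl fun z _ => by rw [Finset.mul_sum]
      _ = ∑ z, ((G.adjMatrix ℝ) ^ m) x z * (k : ℝ) := by
          refine Finset.sum_congr rfl fun z _ => ?_
          congr 1
          have := G.adjMatrix_mulVec_const_apply_of_regular (α := ℝ) (a := 1) hreg (v := z)
          simpa [Matrix.mulVec, dotProduct] using this
      _ = (k : ℝ) ^ (m + 1) := by
          rw [← Finset.sum_mul, ih, pow_succ]

lemma row_sum_aeval {k : ℕ} (hreg : G.IsRegularOfDegree k) (f : Polynomial ℝ) (x : V) :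
    ∑ y, (aeval (G.adjMatrix ℝ) f) x y = f.eval (k : ℝ) := by
  rw [Polynomial.aeval_eq_sum_range]
  calc ∑ y, (∑ m ∈ Finset.range (f.natDegree + 1), f.coeff m • (G.adjMatrix ℝ) ^ m) x y
      = ∑ y, ∑ m ∈ Finset.range (f.natDegree + 1), f.coeff m * ((G.adjMatrix ℝ) ^ m) x y := by
        refine Finset.sum_congr rfl fun y _ => ?_
        rw [Matrix.sum_apply]
        exact Finset.sum_congr rfl fun m _ => rfl
    _ = ∑ m ∈ Finset.range (f.natDegree + 1), f.coeff m * ∑ y, ((G.adjMatrix ℝ) ^ m) x y := by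
        rw [Finset.sum_comm]
        exact Finset.sum_congr rfl fun m _ => by rw [Finset.mul_sum]
    _ = ∑ m ∈ Finset.range (f.natDegree + 1), f.coeff m * (k : ℝ) ^ m := by
        exact Finset.sum_congr rfl fun m _ => by rw [row_sum_pow G hreg]
    _ = f.eval (k : ℝ) := (Polynomial.eval_eq_sum_range _).symm

lemma aeval_adj_symm (f : Polynomial ℝ) (x y : V) :
    (aeval (G.adjMatrix ℝ) f) y x = (aeval (G.adjMatrix ℝ) f) x y := by
  have h : (aeval (G.adjMatrix ℝ) f)ᵀ = aeval (G.adjMatrix ℝ) f := by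
    rw [Polynomial.aeval_eq_sum_range]
    rw [Matrix.transpose_sum]
    refine Finset.sum_congr rfl fun m _ => ?_
    rw [Matrix.transpose_smul, Matrix.transpose_pow, SimpleGraph.transpose_adjMatrix]
  conv_rhs => rw [← h]
  rw [Matrix.transpose_apply]

lemma trace_aeval_sq (f : Polynomial ℝ) :
    Matrix.trace (aeval (G.adjMatrix ℝ) f * aeval (G.adjMatrix ℝ) f)
      = ∑ x, ∑ y, ((aeval (G.adjMatrix ℝ) f) x y) ^ 2 := by
  rw [Matrix.trace]
  refine Finset.sum_congr rfl fun x _ => ?_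
  rw [Matrix.diag_apply, Matrix.mul_apply]
  refine Finset.sum_congr rfl fun y _ => ?_
  rw [aeval_adj_symm G f, sq]

lemma minner_sum_sum (M : Matrix V V ℝ) {ι : Type*} (s t : Finset ι) (f g : ι → Polynomial ℝ) :
    minner M (∑ i ∈ s, f i) (∑ j ∈ t, g j) = ∑ i ∈ s, ∑ j ∈ t, minner M (f i) (g j) := by
  simp only [minner, map_sum, Finset.sum_mul_sum, Matrix.trace_sum]
  rw [Finset.sum_div]
  exact Finset.sum_congr rfl fun i _ => by rw [Finset.sum_div]

end Rows

set_option maxHeartbeats 1600000 in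
/-- Harmonic-mean bound (main theorem). -/
theorem harmonicMean_ge_q {V : Type*} [Fintype V] [DecidableEq V]
    (G : SimpleGraph V) [DecidableRel G.Adj] (hconn : G.Connected)
    (k : ℕ) (hreg : G.IsRegularOfDegree k) (d D : ℕ)
    (hd : Nat.card (spectrum ℝ (G.adjMatrix ℝ)) = d + 1)
    (hD : HasDiameter G D)
    (p : ℕ → Polynomial ℝ) (hp : IsPredistanceSystem (G.adjMatrix ℝ) (k : ℝ) d p) :
    (Fintype.card V : ℝ) / (∑ x : V, ((Fintype.card V : ℝ) - (nDist G x D : ℝ))⁻¹) ≥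
      (∑ i ∈ Finset.range D, p i).eval (k : ℝ) := by
  classical
  have hnV : Nonempty V := hconn.nonempty
  set A := G.adjMatrix ℝ with hA
  set n : ℝ := (Fintype.card V : ℝ) with hn
  have hn0 : (0:ℝ) < n := by rw [hn]; exact_mod_cast Fintype.card_pos
  set q : Polynomial ℝ := ∑ i ∈ Finset.range D, p i with hq
  have hND : ∀ x : V, (nDist G x D : ℝ) = (((univ : Finset V).filter fun y => G.dist x y = D).card : ℝ) := by
    intro x
    rw [nDist, Nat.card_coe_set_eq, Set.ncard_eq_toFinset_card', Set.toFinset_setOf]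
  have hcardT : ∀ x : V, ((((univ : Finset V).filter fun y => G.dist x y ≠ D)).card : ℝ)
      = n - nDist G x D := by
    intro x
    have h := Finset.card_filter_add_card_filter_not
      (s := (univ : Finset V)) (p := fun y => G.dist x y = D)
    have h2 := congrArg (Nat.cast : ℕ → ℝ) h
    push_cast at h2
    rw [hND x, hn, ← Finset.card_univ]
    simp only [ne_eq]
    push_cast
    linarith
  have hinv_nonneg : ∀ x : V, (0:ℝ) ≤ (n - (nDist G x D : ℝ))⁻¹ := by
    intro x
    apply inv_nonneg.2
    rw [← hcardT x]
    positivity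
  rw [ge_iff_le]
  by_cases hqk : 0 < q.eval (k : ℝ)
  swap
  · push_neg at hqk
    refine le_trans hqk (div_nonneg hn0.le (Finset.sum_nonneg fun x _ => hinv_nonneg x))
  have hD1 : 1 ≤ D := by
    rcases Nat.eq_zero_or_pos D with h0 | h1
    · exfalso
      rw [hq, h0] at hqk
      simp at hqk
    · exact h1
  obtain ⟨x0, y0, hxy0⟩ := hD.2
  have hDd : D ≤ d := diam_le_d G hconn d hd hxy0
  have hdegq : q.natDegree < D := by
    have hle : q.natDegree ≤ D - 1 := by
      rw [hq]
      refine Polynomial.natDegree_sum_le_of_forall_le _ _ fun i hi => ?_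
      rw [Finset.mem_range] at hi
      rw [hp.1 i (by omega)]
      omega
    omega
  set B := aeval A q with hB
  have hBrow : ∀ x : V, ∑ y, B x y = q.eval (k:ℝ) := fun x => row_sum_aeval G hreg q x
  have hB0 : ∀ x y : V, G.dist x y = D → B x y = 0 := fun x y hxy =>
    aeval_entry_zero G q x y (by rw [hxy]; exact hdegq)
  have hiqq : minner A q q = q.eval (k:ℝ) := by
    rw [hq, minner_sum_sum]
    calc ∑ i ∈ Finset.range D, ∑ j ∈ Finset.range D, minner A (p i) (p j)
        = ∑ i ∈ Finset.range D, minner A (p i) (p i) := by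
          refine Finset.sum_congr rfl fun i hi => ?_
          rw [Finset.mem_range] at hi
          refine Finset.sum_eq_single i (fun j hj hne => ?_) (fun h => absurd (Finset.mem_range.2 hi) h)
          rw [Finset.mem_range] at hj
          exact hp.2.1 i (by omega) j (by omega) (Ne.symm hne)
      _ = ∑ i ∈ Finset.range D, (p i).eval (k:ℝ) := by
          refine Finset.sum_congr rfl fun i hi => ?_
          rw [Finset.mem_range] at hi
          exact hp.2.2 i (by omega)
      _ = q.eval (k:ℝ) := by rw [hq, Polynomial.eval_finset_sum]
  have htr : ∑ x, ∑ y, (B x y)^2 = n * q.eval (k:ℝ) := by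
    rw [← trace_aeval_sq G q]
    have h3 : Matrix.trace (aeval A q * aeval A q) = minner A q q * n := by
      rw [minner, div_mul_cancel₀]
      exact hn0.ne'
    rw [← hA, h3, hiqq, mul_comm]
  have hper : ∀ x : V, (q.eval (k:ℝ))^2 * (n - (nDist G x D : ℝ))⁻¹ ≤ ∑ y, (B x y)^2 := by
    intro x
    set T := (univ : Finset V).filter fun y => G.dist x y ≠ D with hT
    have hTx : x ∈ T := by
      rw [hT, Finset.mem_filter]
      exact ⟨Finset.mem_univ x, by rw [SimpleGraph.dist_self]; omega⟩
    have hTpos : (0:ℝ) < T.card := by exact_mod_cast Finset.card_pos.mpr ⟨x, hTx⟩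
    have hsplit : q.eval (k:ℝ) = ∑ y ∈ T, B x y := by
      rw [← hBrow x, ← Finset.sum_filter_add_sum_filter_not univ (fun y => G.dist x y ≠ D)
        (fun y => B x y)]
      have h2 : ∑ y ∈ univ.filter (fun y => ¬ G.dist x y ≠ D), B x y = 0 :=
        Finset.sum_eq_zero fun y hy => hB0 x y (by simpa using (Finset.mem_filter.1 hy).2)
      rw [h2, add_zero]
    have hcs : (∑ y ∈ T, B x y)^2 ≤ (T.card : ℝ) * ∑ y ∈ T, (B x y)^2 :=
      sq_sum_le_card_mul_sum_sq
    have hsub : ∑ y ∈ T, (B x y)^2 ≤ ∑ y, (B x y)^2 :=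
      Finset.sum_le_sum_of_subset_of_nonneg (Finset.subset_univ T) (fun y _ _ => sq_nonneg _)
    have hTn : (T.card : ℝ) = n - (nDist G x D : ℝ) := hcardT x
    rw [← hTn, hsplit]
    calc (∑ y ∈ T, B x y)^2 * ((T.card : ℝ))⁻¹
        ≤ ((T.card : ℝ) * ∑ y ∈ T, (B x y)^2) * ((T.card : ℝ))⁻¹ :=
          mul_le_mul_of_nonneg_right hcs (inv_nonneg.2 hTpos.le)
      _ = ∑ y ∈ T, (B x y)^2 := by field_simp
      _ ≤ ∑ y, (B x y)^2 := hsub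
  have hsum : (q.eval (k:ℝ))^2 * (∑ x, (n - (nDist G x D : ℝ))⁻¹) ≤ n * q.eval (k:ℝ) := by
    rw [Finset.mul_sum, ← htr]
    exact Finset.sum_le_sum fun x _ => hper x
  set Sv := ∑ x : V, (n - (nDist G x D : ℝ))⁻¹ with hSv
  have hSvpos : 0 < Sv := by
    obtain ⟨x⟩ := hnV
    refine Finset.sum_pos' (fun y _ => hinv_nonneg y) ⟨x, Finset.mem_univ x, ?_⟩
    have hTx' : (0:ℝ) < n - (nDist G x D : ℝ) := by
      rw [← hcardT x]
      have : x ∈ (univ : Finset V).filter fun y => G.dist x y ≠ D := by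
        rw [Finset.mem_filter]
        exact ⟨Finset.mem_univ x, by rw [SimpleGraph.dist_self]; omega⟩
      exact_mod_cast Finset.card_pos.mpr ⟨x, this⟩
    exact inv_pos.2 hTx'
  rw [le_div_iff₀ hSvpos]
  nlinarith [hsum, hqk, hSvpos]
end

section
/- Let Γ be a connected graph with diameter D = 2, Laplacian matrix L, and Laplacian predistance polynomials r_i. If equality holds in the Laplacian harmonic-mean bound, i.e., A_2 = ∑_{i=2}^d r_i(L) (equivalently s_1(L) = J - A_2 = I + A), then Γ is regular. -/
open Polynomial Matrix Finset
open scoped Classical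

/-!
Every polynomial in the Laplacian `L` has constant row sums, since `L 𝟙 = 0` gives
`p(L) 𝟙 = p(0) 𝟙`. When the diameter is two, `A₂ = J - I - A`, whose row sum at `x` is
`n - 1 - deg x`. So if `A₂` is a polynomial in `L`, all degrees agree.
-/

theorem Matrix.aeval_mulVec_of_mulVec_eq_smul {n R : Type*} [Fintype n] [DecidableEq n]
    [CommRing R] {M : Matrix n n R} {v : n → R} {μ : R} (hv : M *ᵥ v = μ • v) (p : R[X]) :
    aeval M p *ᵥ v = p.eval μ • v := by
  induction p using Polynomial.induction_on with
  | C a => simp [Algebra.algebraMap_eq_smul_one, smul_mulVec]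
  | add p q hp hq => simp [add_mulVec, hp, hq, add_smul]
  | monomial k a ih =>
    rw [pow_succ, ← mul_assoc, map_mul, aeval_X, ← mulVec_mulVec, hv, mulVec_smul, ih, smul_smul]
    simp only [eval_mul, eval_X]
    ring_nf

namespace SimpleGraph

theorem aeval_lapMatrix_mulVec_const {V : Type*} [Fintype V] [DecidableEq V]
    (G : SimpleGraph V) [DecidableRel G.Adj] (p : ℝ[X]) :
    aeval (G.lapMatrix ℝ) p *ᵥ (fun _ ↦ 1) = fun _ ↦ p.eval 0 := by
  rw [aeval_mulVec_of_mulVec_eq_smul (μ := 0) (by simp [lapMatrix_mulVec_const_eq_zero]) p]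
  ext
  simp

theorem distMatrix_two_eq {V : Type*} [DecidableEq V] {G : SimpleGraph V} [DecidableRel G.Adj]
    (hconn : G.Connected) (hdist : ∀ x y, G.dist x y ≤ 2) :
    distMatrix G 2 = of (fun _ _ ↦ 1) - 1 - G.adjMatrix ℝ := by
  ext x y
  by_cases hxy : x = y
  · subst hxy
    simp [distMatrix]
  by_cases hadj : G.Adj x y
  · simp [distMatrix, hxy, hadj, dist_eq_one_iff_adj.mpr hadj]
  · have h0 : G.dist x y ≠ 0 := fun h ↦ hxy (hconn.dist_eq_zero_iff.mp h)
    have h1 : G.dist x y ≠ 1 := fun h ↦ hadj (dist_eq_one_iff_adj.mp h)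
    have h2 : G.dist x y = 2 := by have := hdist x y; omega
    simp [distMatrix, hxy, hadj, h2]

theorem distMatrix_two_mulVec_const_apply {V : Type*} [Fintype V] [DecidableEq V]
    {G : SimpleGraph V} [DecidableRel G.Adj] (hconn : G.Connected)
    (hdist : ∀ x y, G.dist x y ≤ 2) (x : V) :
    (distMatrix G 2 *ᵥ fun _ ↦ 1) x = Fintype.card V - 1 - G.degree x := by
  have hA : (G.adjMatrix ℝ *ᵥ fun _ ↦ 1) x = G.degree x := by simp
  rw [distMatrix_two_eq hconn hdist, sub_mulVec, sub_mulVec, one_mulVec, Pi.sub_apply,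
    Pi.sub_apply, hA]
  simp [mulVec, dotProduct]

end SimpleGraph

theorem lap_diam_two_regular_general {V : Type*} [Fintype V] [DecidableEq V]
    (G : SimpleGraph V) [DecidableRel G.Adj] (hconn : G.Connected)
    (d : ℕ)
    (hD : HasDiameter G 2)
    (r : ℕ → Polynomial ℝ)
    (heq : distMatrix G 2 = ∑ i ∈ Finset.Icc 2 d, aeval (G.lapMatrix ℝ) (r i)) :
    ∃ k : ℕ, G.IsRegularOfDegree k := by
  obtain ⟨x₀⟩ := hconn.nonempty
  rw [← map_sum] at heq
  have hrow (x : V) : (Fintype.card V : ℝ) - 1 - G.degree x = (∑ i ∈ Icc 2 d, r i).eval 0 := by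
    rw [← SimpleGraph.distMatrix_two_mulVec_const_apply hconn hD.1, heq,
      G.aeval_lapMatrix_mulVec_const]
  refine ⟨G.degree x₀, fun x ↦ ?_⟩
  have hx := hrow x
  have hx₀ := hrow x₀
  exact_mod_cast (by linarith : (G.degree x : ℝ) = G.degree x₀)

/-- If a connected graph of diameter `2` attains equality in the Laplacian
harmonic-mean bound, i.e. `A₂ = ∑_{i=2}^d rᵢ(L)`, then it is regular. -/
theorem lap_diam_two_regular {V : Type*} [Fintype V] [DecidableEq V]
    (G : SimpleGraph V) [DecidableRel G.Adj] (hconn : G.Connected)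
    (d : ℕ) (hd : Nat.card (spectrum ℝ (G.lapMatrix ℝ)) = d + 1)
    (hD : HasDiameter G 2)
    (r : ℕ → Polynomial ℝ) (hr : IsPredistanceSystem (G.lapMatrix ℝ) (0 : ℝ) d r)
    (heq : distMatrix G 2 = ∑ i ∈ Finset.Icc 2 d, aeval (G.lapMatrix ℝ) (r i)) :
    ∃ k : ℕ, G.IsRegularOfDegree k :=
  lap_diam_two_regular_general G hconn d hD r heq
end
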